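/- Suppose a graph G has an assignment of pairwise-disjoint horizontal segments (bars) to vertices and vertical segments to edges connecting the bars of the edge's endpoints, such that every vertical line in the plane intersects at most k bars. Then pw(G) ≤ k − 1. -/

import Mathlib

/-- A path decomposition of a graph: a sequence of bags covering all vertices,
with every edge inside some bag, and each vertex's bags forming a contiguous
subsequence. -/
def IsPathDecomp {V : Type*} (G : SimpleGraph V) {n : ℕ} (B : Fin n → Finset V) : Prop :=
  (∀ v, ∃ i, v ∈ B i) ∧
  (∀ ⦃u v⦄, G.Adj u v → ∃ i, u ∈ B i ∧ v ∈ B i) ∧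
  (∀ v : V, ∀ i j k : Fin n, i ≤ j → j ≤ k → v ∈ B i → v ∈ B k → v ∈ B j)

/-- The pathwidth of a graph: the minimum, over path decompositions, of the
maximum bag size minus one. -/
noncomputable def pathwidth {V : Type*} (G : SimpleGraph V) : ℕ :=
  sInf {w | ∃ (n : ℕ) (B : Fin n → Finset V), IsPathDecomp G B ∧ ∀ i, (B i).card ≤ w + 1}

/-!
Sweep a vertical line from left to right and stop at the left endpoints of the bars. The bars met
by the line at a stop form a bag of at most `k` vertices. A bar meets the line exactly at the stops
inside its `x`-range, so its bags are contiguous; a bar is met at its own left endpoint; and the two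
bars of an edge overlap in `x`, so both are met at the larger of their two left endpoints.
-/

theorem pathwidth_le_of_isPathDecomp {V : Type*} {G : SimpleGraph V} {n w : ℕ}
    {B : Fin n → Finset V} (hB : IsPathDecomp G B) (hcard : ∀ i, (B i).card ≤ w + 1) :
    pathwidth G ≤ w :=
  Nat.sInf_le ⟨n, B, hB, hcard⟩

section Sweep

variable {V α : Type*} [Fintype V] [LinearOrder α] (l r : V → α)

def sweepBag (x : α) : Finset V :=
  {v | l v ≤ x ∧ x ≤ r v}

theorem mem_sweepBag {x : α} {v : V} : v ∈ sweepBag l r x ↔ l v ≤ x ∧ x ≤ r v := by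
  simp [sweepBag]

theorem card_sweepBag (x : α) :
    (sweepBag l r x).card = {v : V | l v ≤ x ∧ x ≤ r v}.ncard := by
  rw [← Set.ncard_coe_finset, sweepBag, Finset.coe_filter]
  simp only [Finset.mem_univ, true_and]

variable {l r}

theorem isPathDecomp_sweepBag {G : SimpleGraph V} {n : ℕ} {xs : Fin n → α}
    (hmono : Monotone xs) (hcover : ∀ v, ∃ i, xs i = l v) (hlr : ∀ v, l v ≤ r v)
    (hedge : ∀ ⦃u v⦄, G.Adj u v → ∃ x, x ∈ Set.Icc (l u) (r u) ∧ x ∈ Set.Icc (l v) (r v)) :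
    IsPathDecomp G (fun i => sweepBag l r (xs i)) := by
  simp only [IsPathDecomp, mem_sweepBag]
  refine ⟨fun v => ?_, fun u v huv => ?_, fun v i j m hij hjm hi hm => ?_⟩
  · obtain ⟨i, hi⟩ := hcover v
    exact ⟨i, by rw [hi]; exact ⟨le_rfl, hlr v⟩⟩
  · obtain ⟨x, ⟨hux, hxu⟩, hvx, hxv⟩ := hedge huv
    obtain ⟨i, hi⟩ := hcover (if l u ≤ l v then v else u)
    refine ⟨i, ?_⟩
    split_ifs at hi with h <;> rw [hi]
    · exact ⟨⟨h, hvx.trans hxu⟩, le_rfl, hlr v⟩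
    · exact ⟨⟨le_rfl, hlr u⟩, (not_le.1 h).le, hux.trans hxv⟩
  · exact ⟨hi.1.trans (hmono hij), (hmono hjm).trans hm.2⟩

end Sweep

theorem stmt3_general {V : Type*} [Fintype V] [Nonempty V] (G : SimpleGraph V) (k : ℕ)
    (l r : V → ℝ) (hlr : ∀ v, l v ≤ r v)
    (hedge : ∀ ⦃u v⦄, G.Adj u v →
      ∃ x : ℝ, x ∈ Set.Icc (l u) (r u) ∧ x ∈ Set.Icc (l v) (r v))
    (hline : ∀ x : ℝ, ({v : V | l v ≤ x ∧ x ≤ r v}).ncard ≤ k) :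
    pathwidth G + 1 ≤ k := by
  have hbag (x : ℝ) : (sweepBag l r x).card ≤ k := card_sweepBag l r x ▸ hline x
  obtain ⟨v₀⟩ := ‹Nonempty V›
  have hk : 1 ≤ k :=
    (Finset.card_pos.2 ⟨v₀, (mem_sweepBag l r).2 ⟨le_rfl, hlr v₀⟩⟩).trans_le (hbag (l v₀))
  let xs := (Finset.univ.image l).orderEmbOfFin rfl
  have hcover (v : V) : ∃ i, xs i = l v :=
    Set.mem_range.1 (by simp [xs, Finset.range_orderEmbOfFin])
  have hpw : pathwidth G ≤ k - 1 :=
    pathwidth_le_of_isPathDecomp (isPathDecomp_sweepBag xs.monotone hcover hlr hedge)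
      fun i => by have := hbag (xs i); omega
  omega

/-- If `G` has a bar-visibility-style representation — pairwise disjoint
horizontal bars (vertex `v` gets the bar at height `y v` spanning
`[l v, r v]`), each edge realized by a vertical segment at some `x`-coordinate
lying in the `x`-range of both endpoint bars — in which every vertical line
meets at most `k` bars, then `pw(G) ≤ k - 1`. -/
theorem stmt3 {V : Type*} [Fintype V] [Nonempty V] (G : SimpleGraph V) (k : ℕ)
    (l r y : V → ℝ) (hlr : ∀ v, l v ≤ r v)
    (hdisj : ∀ u v : V, u ≠ v →
      Disjoint {p : ℝ × ℝ | p.2 = y u ∧ p.1 ∈ Set.Icc (l u) (r u)}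
               {p : ℝ × ℝ | p.2 = y v ∧ p.1 ∈ Set.Icc (l v) (r v)})
    (hedge : ∀ ⦃u v⦄, G.Adj u v →
      ∃ x : ℝ, x ∈ Set.Icc (l u) (r u) ∧ x ∈ Set.Icc (l v) (r v))
    (hline : ∀ x : ℝ, ({v : V | l v ≤ x ∧ x ≤ r v}).ncard ≤ k) :
    pathwidth G + 1 ≤ k :=
  stmt3_general G k l r hlr hedge hline
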